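/- If f: D → H is C^1 on a domain D ⊆ H^n and f is left regular (∂̄_{q_l} f = 0 for all l), then for any quaternionic matrix a ∈ GL(n, H) the pull-back f̂(q) = f(a q) satisfies ∂̄_{q_j} f̂(q) = Σ_k ā_{kj} (∂̄_{Q_k} f)(a q); in particular f̂ is left regular on a^{-1}D. -/

import Mathlib

open Quaternion Finset

/-- The quaternion unit `i`. -/
noncomputable def qi : ℍ[ℝ] := ⟨0, 1, 0, 0⟩
/-- The quaternion unit `j`. -/
noncomputable def qj : ℍ[ℝ] := ⟨0, 0, 1, 0⟩
/-- The quaternion unit `k`. -/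
noncomputable def qk : ℍ[ℝ] := ⟨0, 0, 0, 1⟩

/-- The Cauchy-Fueter operator `∂̄_{q_l}` in the `l`-th quaternionic variable:
`∂̄_{q_l} f = ∂_{x_{4l-3}} f + i ∂_{x_{4l-2}} f + j ∂_{x_{4l-1}} f + k ∂_{x_{4l}} f`,
expressed via directional derivatives in the directions `1, i, j, k` of the `l`-th
coordinate. -/
noncomputable def CF (n : ℕ) (f : (Fin n → ℍ[ℝ]) → ℍ[ℝ]) (q : Fin n → ℍ[ℝ])
    (l : Fin n) : ℍ[ℝ] :=
  fderiv ℝ f q (Pi.single l 1) +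
    qi * fderiv ℝ f q (Pi.single l qi) +
    qj * fderiv ℝ f q (Pi.single l qj) +
    qk * fderiv ℝ f q (Pi.single l qk)

/-
By the chain rule, the real differential of `f̂ = f ∘ a` at `q` in the direction
`c` of the variable `q_j` is `∑_k F_k (a_{kj} c)`, where `F_k` is the partial differential of
`f` in `Q_k` at `a q`. The Cauchy-Fueter operator applies `G ↦ G 1 + i G i + j G j + k G k` to
these partial differentials, and for every real-linear `G : ℍ → ℍ` and every `b ∈ ℍ` one has
`∑_{e ∈ {1,i,j,k}} e G(b e) = b̄ ∑_{e ∈ {1,i,j,k}} e G(e)`. Summing over `k` gives the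
transformation formula, and left regularity of `f̂` follows termwise.
-/

open scoped Matrix

noncomputable def cauchyFueterSum (G : ℍ[ℝ] → ℍ[ℝ]) : ℍ[ℝ] :=
  G 1 + qi * G qi + qj * G qj + qk * G qk

theorem CF_eq_cauchyFueterSum (n : ℕ) (f : (Fin n → ℍ[ℝ]) → ℍ[ℝ]) (q : Fin n → ℍ[ℝ])
    (l : Fin n) : CF n f q l = cauchyFueterSum (fun c => fderiv ℝ f q (Pi.single l c)) :=
  rfl

theorem cauchyFueterSum_sum {ι : Type*} (s : Finset ι) (G : ι → ℍ[ℝ] → ℍ[ℝ]) :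
    cauchyFueterSum (fun c => ∑ k ∈ s, G k c) = ∑ k ∈ s, cauchyFueterSum (G k) := by
  simp only [cauchyFueterSum, Finset.mul_sum, ← Finset.sum_add_distrib]

theorem quaternion_eq_re_smul_one_add_im_smul_ijk (x : ℍ[ℝ]) :
    x = x.re • (1 : ℍ[ℝ]) + x.imI • qi + x.imJ • qj + x.imK • qk := by
  ext <;> simp [Quaternion.re_smul] <;> simp [qi, qj, qk]

theorem LinearMap.apply_eq_re_smul_add_im_smul_ijk {M : Type*} [AddCommGroup M] [Module ℝ M]
    (G : ℍ[ℝ] →ₗ[ℝ] M) (x : ℍ[ℝ]) :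
    G x = x.re • G 1 + x.imI • G qi + x.imJ • G qj + x.imK • G qk := by
  conv_lhs => rw [quaternion_eq_re_smul_one_add_im_smul_ijk x]
  simp only [map_add, map_smul]

/- Expanding `G` on the real basis `1, i, j, k` reduces this to the multiplication table
of `ℍ`. -/
theorem cauchyFueterSum_comp_mulLeft (G : ℍ[ℝ] →ₗ[ℝ] ℍ[ℝ]) (b : ℍ[ℝ]) :
    cauchyFueterSum (fun c => G (b * c)) = star b * cauchyFueterSum G := by
  simp only [cauchyFueterSum, G.apply_eq_re_smul_add_im_smul_ijk (b * _), mul_one]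
  rw [G.apply_eq_re_smul_add_im_smul_ijk b]
  ext <;> simp [Quaternion.re_smul] <;> simp [qi, qj, qk] <;> ring

theorem fderiv_comp_mulVec_apply {A E ι : Type*} [NormedRing A] [NormedAlgebra ℝ A]
    [FiniteDimensional ℝ A] [NormedAddCommGroup E] [NormedSpace ℝ E] [Fintype ι]
    {f : (ι → A) → E} (a : Matrix ι ι A) {q : ι → A} (hf : DifferentiableAt ℝ f (a *ᵥ q))
    (v : ι → A) : fderiv ℝ (fun p => f (a *ᵥ p)) q v = fderiv ℝ f (a *ᵥ q) (a *ᵥ v) := by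
  let L := (Matrix.mulVecBilin ℝ ℝ a).toContinuousLinearMap
  have h := fderiv_comp (g := f) (f := L) q hf L.differentiableAt
  rw [L.fderiv] at h
  exact congrArg (· v) h

theorem Matrix.mulVec_single_eq_sum {A ι : Type*} [Semiring A] [Fintype ι] [DecidableEq ι]
    (a : Matrix ι ι A) (j : ι) (c : A) : a *ᵥ Pi.single j c = ∑ k, Pi.single k (a k j * c) := by
  rw [Finset.univ_sum_single (fun k => a k j * c)]
  ext k
  simp

theorem CF_comp_mulVec (n : ℕ) {f : (Fin n → ℍ[ℝ]) → ℍ[ℝ]} (a : Matrix (Fin n) (Fin n) ℍ[ℝ])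
    {q : Fin n → ℍ[ℝ]} (hf : DifferentiableAt ℝ f (a *ᵥ q)) (j : Fin n) :
    CF n (fun p => f (a *ᵥ p)) q j = ∑ k, star (a k j) * CF n f (a *ᵥ q) k := by
  set F := fderiv ℝ f (a *ᵥ q)
  simp only [CF_eq_cauchyFueterSum, fderiv_comp_mulVec_apply a hf, a.mulVec_single_eq_sum,
    map_sum, cauchyFueterSum_sum]
  refine Finset.sum_congr rfl fun k _ => ?_
  exact cauchyFueterSum_comp_mulLeft
    ((F : (Fin n → ℍ[ℝ]) →ₗ[ℝ] ℍ[ℝ]) ∘ₗ LinearMap.single ℝ (fun _ : Fin n => ℍ[ℝ]) k) (a k j)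

theorem cauchy_fueter_matrix_pullback_general (n : ℕ) (D : Set (Fin n → ℍ[ℝ]))
    (f : (Fin n → ℍ[ℝ]) → ℍ[ℝ])
    (hf : ∀ p ∈ D, ContDiffAt ℝ 1 f p)
    (a : Matrix (Fin n) (Fin n) ℍ[ℝ]) :
    (∀ q : Fin n → ℍ[ℝ], a.mulVec q ∈ D → ∀ j : Fin n,
      CF n (fun p => f (a.mulVec p)) q j =
        ∑ k, star (a k j) * CF n f (a.mulVec q) k) ∧
    ((∀ p ∈ D, ∀ l : Fin n, CF n f p l = 0) →
      ∀ q : Fin n → ℍ[ℝ], a.mulVec q ∈ D → ∀ j : Fin n,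
        CF n (fun p => f (a.mulVec p)) q j = 0) := by
  have pullback : ∀ q, a *ᵥ q ∈ D → ∀ j,
      CF n (fun p => f (a *ᵥ p)) q j = ∑ k, star (a k j) * CF n f (a *ᵥ q) k :=
    fun q hq => CF_comp_mulVec n a ((hf _ hq).differentiableAt one_ne_zero)
  refine ⟨pullback, fun hreg q hq j => ?_⟩
  simp [pullback q hq j, hreg _ hq]

/-- Transformation of the Cauchy-Fueter operator under the pull-back
`f̂(q) = f(a q)` by an invertible quaternionic matrix `a ∈ GL(n,ℍ)`:
`∂̄_{q_j} f̂(q) = ∑_k ā_{kj} (∂̄_{Q_k} f)(a q)`; in particular, if `f` is left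
regular on `D` then `f̂` is left regular on `a⁻¹ D`. -/
theorem cauchy_fueter_matrix_pullback (n : ℕ) (D : Set (Fin n → ℍ[ℝ]))
    (hD : IsOpen D) (f : (Fin n → ℍ[ℝ]) → ℍ[ℝ])
    (hf : ∀ p ∈ D, ContDiffAt ℝ 1 f p)
    (a : Matrix (Fin n) (Fin n) ℍ[ℝ]) (ha : IsUnit a) :
    (∀ q : Fin n → ℍ[ℝ], a.mulVec q ∈ D → ∀ j : Fin n,
      CF n (fun p => f (a.mulVec p)) q j =
        ∑ k, star (a k j) * CF n f (a.mulVec q) k) ∧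
    ((∀ p ∈ D, ∀ l : Fin n, CF n f p l = 0) →
      ∀ q : Fin n → ℍ[ℝ], a.mulVec q ∈ D → ∀ j : Fin n,
        CF n (fun p => f (a.mulVec p)) q j = 0) :=
  cauchy_fueter_matrix_pullback_general n D f hf a
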